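/- Let n ≥ 6, let σ be a 3-form on ℝⁿ, and let F : ℝⁿ → ℝⁿ be a continuous map such that F(tX) = tF(X) for all t ∈ ℝ and X ∈ ℝⁿ, ⟨F(X), X⟩ = 0 and ‖F(X)‖ = ‖X‖ for all X, and σ_X² = −‖X‖² id + X⊗X + F(X)⊗F(X) for all X ∈ ℝⁿ. Then F is linear; moreover F is an orthogonal, skew-symmetric endomorphism of ℝⁿ with F² = −id (i.e. a Hermitian structure on ℝⁿ). -/

import Mathlib

open scoped RealInnerProductSpace

noncomputable section

/-- Euclidean space `ℝⁿ`. -/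
abbrev Euc (n : ℕ) : Type := EuclideanSpace ℝ (Fin n)

/-- The skew-symmetric endomorphism `τ_X` of `ℝⁿ` associated to a 3-form `τ` and a vector `X`,
characterized by `⟪τ_X Y, Z⟫ = τ (X, Y, Z)`. -/
noncomputable def contr3 {n : ℕ} (τ : AlternatingMap ℝ (Euc n) ℝ (Fin 3)) (X : Euc n) :
    Euc n →ₗ[ℝ] Euc n where
  toFun Y := ∑ i : Fin n,
    ((τ.curryLeft X).curryLeft Y ![EuclideanSpace.single i 1]) • EuclideanSpace.single i (1 : ℝ)
  map_add' Y₁ Y₂ := by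
    simp [map_add, add_smul, Finset.sum_add_distrib]
  map_smul' c Y := by
    simp [map_smul, smul_smul, Finset.smul_sum]

/-- `τ` is a vector cross product: `‖τ_X Y‖² = ‖X‖²‖Y‖² − ⟪X,Y⟫²`. -/
def IsVCP {n : ℕ} (τ : AlternatingMap ℝ (Euc n) ℝ (Fin 3)) : Prop :=
  ∀ X Y : Euc n, ‖contr3 τ X Y‖ ^ 2 = ‖X‖ ^ 2 * ‖Y‖ ^ 2 - ⟪X, Y⟫ ^ 2

/-- `σ` is a generalized vector cross product: there is a nonzero skew-symmetric endomorphism `A`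
such that for every unit vector `X`, `σ_X` is orthogonally conjugate to `A`. -/
def IsGVCP {n : ℕ} (σ : AlternatingMap ℝ (Euc n) ℝ (Fin 3)) : Prop :=
  ∃ A : Euc n →ₗ[ℝ] Euc n, A ≠ 0 ∧ (∀ X Y : Euc n, ⟪A X, Y⟫ = -⟪X, A Y⟫) ∧
    ∀ X : Euc n, ‖X‖ = 1 → ∃ u : Euc n ≃ₗᵢ[ℝ] Euc n,
      ∀ Y : Euc n, contr3 σ X Y = u (A (u.symm Y))

/-- The endomorphism `U ⊗ V : X ↦ ⟪X, V⟫ U`. -/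
noncomputable def tens {n : ℕ} (U V : Euc n) : Euc n →ₗ[ℝ] Euc n where
  toFun X := ⟪X, V⟫ • U
  map_add' X₁ X₂ := by simp only [inner_add_left, add_smul]
  map_smul' c X := by simp only [RingHom.id_apply]; rw [real_inner_smul_left, mul_smul]

/-- The `i`-th coordinate, as a linear functional on `ℝⁿ`. -/
noncomputable def coordL {n : ℕ} (i : Fin n) : Euc n →ₗ[ℝ] ℝ where
  toFun x := x i
  map_add' _ _ := rfl
  map_smul' _ _ := rfl

/-- The elementary 3-form `eᵢ ∧ eⱼ ∧ e_k` on `ℝⁿ`. -/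
noncomputable def elem3 {n : ℕ} (i j k : Fin n) : AlternatingMap ℝ (Euc n) ℝ (Fin 3) :=
  (Matrix.detRowAlternating : AlternatingMap ℝ (Fin 3 → ℝ) ℝ (Fin 3)).compLinearMap
    (LinearMap.pi (fun s : Fin 3 => coordL (![i, j, k] s)))

/-- The action of an orthogonal transformation `α` on 3-forms:
`(α · τ)(X,Y,Z) = τ(α⁻¹X, α⁻¹Y, α⁻¹Z)`. -/
noncomputable def oAct {n : ℕ} (α : Euc n ≃ₗᵢ[ℝ] Euc n)
    (τ : AlternatingMap ℝ (Euc n) ℝ (Fin 3)) : AlternatingMap ℝ (Euc n) ℝ (Fin 3) :=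
  τ.compLinearMap α.symm.toLinearEquiv.toLinearMap

/-- The volume form `e₁ ∧ e₂ ∧ e₃` (in any `ℝⁿ` with `n ≥ 3`). -/
noncomputable def vol3Gen {n : ℕ} (h : 3 ≤ n) : AlternatingMap ℝ (Euc n) ℝ (Fin 3) :=
  elem3 ⟨0, by omega⟩ ⟨1, by omega⟩ ⟨2, by omega⟩

/-- The fundamental `G₂` 3-form
`τ₀ = e₁∧e₂∧e₇ + e₃∧e₄∧e₇ + e₅∧e₆∧e₇ + e₁∧e₃∧e₅ − e₁∧e₄∧e₆ − e₂∧e₃∧e₆ − e₂∧e₄∧e₅`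
(with 1-indexed basis vectors, stated in any `ℝⁿ` with `n ≥ 7`). -/
noncomputable def tau0Gen {n : ℕ} (h : 7 ≤ n) : AlternatingMap ℝ (Euc n) ℝ (Fin 3) :=
  elem3 ⟨0, by omega⟩ ⟨1, by omega⟩ ⟨6, by omega⟩
  + elem3 ⟨2, by omega⟩ ⟨3, by omega⟩ ⟨6, by omega⟩
  + elem3 ⟨4, by omega⟩ ⟨5, by omega⟩ ⟨6, by omega⟩
  + elem3 ⟨0, by omega⟩ ⟨2, by omega⟩ ⟨4, by omega⟩
  - elem3 ⟨0, by omega⟩ ⟨3, by omega⟩ ⟨5, by omega⟩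
  - elem3 ⟨1, by omega⟩ ⟨2, by omega⟩ ⟨5, by omega⟩
  - elem3 ⟨1, by omega⟩ ⟨3, by omega⟩ ⟨4, by omega⟩

/-- The `SU(3)` 3-form `σ₀ = e₁∧e₃∧e₅ − e₁∧e₄∧e₆ − e₂∧e₃∧e₆ − e₂∧e₄∧e₅`
(with 1-indexed basis vectors, stated in any `ℝⁿ` with `n ≥ 6`). -/
noncomputable def sigma0Gen {n : ℕ} (h : 6 ≤ n) : AlternatingMap ℝ (Euc n) ℝ (Fin 3) :=
  elem3 ⟨0, by omega⟩ ⟨2, by omega⟩ ⟨4, by omega⟩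
  - elem3 ⟨0, by omega⟩ ⟨3, by omega⟩ ⟨5, by omega⟩
  - elem3 ⟨1, by omega⟩ ⟨2, by omega⟩ ⟨5, by omega⟩
  - elem3 ⟨1, by omega⟩ ⟨3, by omega⟩ ⟨4, by omega⟩

end

/-!
For fixed `U`, the identity for `σ_X²` exhibits `X ↦ ⟪F X, U⟫²` as a quadratic form `Q` in `X`.
A continuous odd square root `k` of a quadratic form is linear: if `k x, k y > 0`, the
intermediate value theorem gives a zero `z` of `k` on the segment from `x` to `-y`; then
`Q z = 0`, so `z` lies in the radical of the semidefinite form `Q`, and the two linear relations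
`polar Q z x = polar Q z y = 0` force `polar Q x y = 2 k x k y`. Hence each `X ↦ ⟪F X, U⟫` is
linear, so `F` is linear, and `‖F X‖ = ‖X‖`, `⟪F X, X⟫ = 0` polarize to orthogonality and
skew-symmetry.
-/

namespace QuadraticMap

variable {E : Type*} [AddCommGroup E] [Module ℝ E]

theorem polar_eq_zero_of_nonneg_of_eq_zero (Q : QuadraticMap ℝ E ℝ) (hQ : ∀ x, 0 ≤ Q x)
    {z : E} (hz : Q z = 0) (w : E) : polar Q z w = 0 := by
  by_contra hp
  have hline : ∀ t : ℝ, 0 ≤ t * polar Q z w + Q w := fun t => by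
    have h : polar Q (t • z) w = Q (t • z + w) - Q (t • z) - Q w := rfl
    rw [polar_smul_left, Q.map_smul, hz, smul_zero, smul_eq_mul] at h
    linarith [hQ (t • z + w)]
  have h := hline (-(Q w + 1) / polar Q z w)
  rw [div_mul_cancel₀ _ hp] at h
  linarith

variable [TopologicalSpace E] [IsTopologicalAddGroup E] [ContinuousSMul ℝ E]
  {Q : QuadraticMap ℝ E ℝ} {k : E → ℝ}

theorem polar_eq_of_sq_eq_of_pos (hk : Continuous k) (hodd : ∀ x, k (-x) = -k x)
    (hkQ : ∀ x, k x ^ 2 = Q x) {x y : E} (hx : 0 < k x) (hy : 0 < k y) :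
    polar Q x y = 2 * k x * k y := by
  have hQ : ∀ z, 0 ≤ Q z := fun z => hkQ z ▸ sq_nonneg (k z)
  set c : ℝ → E := fun t => (1 - t) • x + (-t) • y
  have hc : Continuous fun t => k (c t) := hk.comp (by fun_prop)
  obtain ⟨t, ⟨ht0, ht1⟩, ht⟩ : ∃ t ∈ Set.Icc (0 : ℝ) 1, k (c t) = 0 := by
    refine intermediate_value_Icc' zero_le_one hc.continuousOn ⟨?_, ?_⟩
    · simpa [c, hodd] using hy.le
    · simpa [c] using hx.le
  have hrad : ∀ w, polar Q (c t) w = 0 :=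
    polar_eq_zero_of_nonneg_of_eq_zero Q hQ (by rw [← hkQ, ht, zero_pow two_ne_zero])
  have hexp : ∀ w, polar Q (c t) w = (1 - t) * polar Q x w - t * polar Q y w := fun w => by
    simp only [c, polar_add_left, polar_smul_left, smul_eq_mul]
    ring
  have hxx := hexp x
  have hyy := hexp y
  rw [hrad, polar_comm Q y x, polar_self, ← hkQ, nsmul_eq_mul, Nat.cast_ofNat] at hxx
  rw [hrad, polar_self, ← hkQ, nsmul_eq_mul, Nat.cast_ofNat] at hyy
  have ht0' : t ≠ 0 := by
    rintro rfl
    nlinarith [mul_pos hx hx]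
  have ht1' : 1 - t ≠ 0 := by
    intro h
    rw [h] at hyy
    nlinarith [mul_pos hy hy]
  have hprod : t * (1 - t) * (polar Q x y ^ 2 - (2 * k x * k y) ^ 2) = 0 := by
    linear_combination ((1 - t) * polar Q x y) * hxx - (2 * (1 - t) * k x ^ 2) * hyy
  have hpos : 0 ≤ polar Q x y := by
    nlinarith [mul_nonneg (sub_nonneg.2 ht1) (sq_nonneg (k x)), mul_nonneg ht0 (sq_nonneg (k y))]
  exact (sq_eq_sq₀ hpos (by positivity)).1 <| sub_eq_zero.1 <|
    (mul_eq_zero.1 hprod).resolve_left (mul_ne_zero ht0' ht1')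

theorem polar_eq_of_sq_eq (hk : Continuous k) (hodd : ∀ x, k (-x) = -k x)
    (hkQ : ∀ x, k x ^ 2 = Q x) (x y : E) : polar Q x y = 2 * k x * k y := by
  have hQ : ∀ z, 0 ≤ Q z := fun z => hkQ z ▸ sq_nonneg (k z)
  have hzero : ∀ {z}, k z = 0 → ∀ w, polar Q z w = 0 := fun hz =>
    polar_eq_zero_of_nonneg_of_eq_zero Q hQ (by rw [← hkQ, hz, zero_pow two_ne_zero])
  have hpos_left : ∀ x y, 0 < k x → polar Q x y = 2 * k x * k y := by
    intro x y hx
    rcases lt_trichotomy (k y) 0 with hy | hy | hy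
    · have h := polar_eq_of_sq_eq_of_pos hk hodd hkQ hx (by rw [hodd]; linarith : 0 < k (-y))
      rw [polar_comm, polar_neg_left, polar_comm, hodd] at h
      linarith
    · rw [polar_comm, hzero hy, hy, mul_zero]
    · exact polar_eq_of_sq_eq_of_pos hk hodd hkQ hx hy
  rcases lt_trichotomy (k x) 0 with hx | hx | hx
  · have h := hpos_left (-x) y (by rw [hodd]; linarith)
    rw [polar_neg_left, hodd] at h
    linarith
  · rw [hzero hx, hx, mul_zero, zero_mul]
  · exact hpos_left x y hx

end QuadraticMap

theorem exists_linearMap_eq_of_sq_eq_quadraticMap {E : Type*} [AddCommGroup E] [Module ℝ E]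
    [TopologicalSpace E] [IsTopologicalAddGroup E] [ContinuousSMul ℝ E]
    {Q : QuadraticMap ℝ E ℝ} {k : E → ℝ} (hk : Continuous k) (hodd : ∀ x, k (-x) = -k x)
    (hkQ : ∀ x, k x ^ 2 = Q x) : ∃ ℓ : E →ₗ[ℝ] ℝ, ∀ x, ℓ x = k x := by
  by_cases h : ∃ w, k w ≠ 0
  swap
  · exact ⟨0, fun x => (not_exists_not.mp h x).symm⟩
  obtain ⟨w, hw⟩ := h
  refine ⟨(2 * k w)⁻¹ • Q.polarBilin.flip w, fun x => ?_⟩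
  rw [LinearMap.smul_apply, LinearMap.flip_apply, QuadraticMap.polarBilin_apply_apply,
    QuadraticMap.polar_eq_of_sq_eq hk hodd hkQ, smul_eq_mul]
  field_simp

section Contraction

variable {n : ℕ}

theorem contr3_add_left (τ : AlternatingMap ℝ (Euc n) ℝ (Fin 3)) (X X' Y : Euc n) :
    contr3 τ (X + X') Y = contr3 τ X Y + contr3 τ X' Y := by
  simp [contr3, map_add, add_smul, Finset.sum_add_distrib]

theorem contr3_smul_left (τ : AlternatingMap ℝ (Euc n) ℝ (Fin 3)) (t : ℝ) (X Y : Euc n) :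
    contr3 τ (t • X) Y = t • contr3 τ X Y := by
  simp [contr3, map_smul, smul_smul, Finset.smul_sum]

noncomputable def contr3SqForm (σ : AlternatingMap ℝ (Euc n) ℝ (Fin 3)) (U : Euc n) :
    QuadraticForm ℝ (Euc n) :=
  LinearMap.BilinMap.toQuadraticMap <| LinearMap.mk₂ ℝ
    (fun X X' => ⟪contr3 σ X (contr3 σ X' U), U⟫ + ⟪X, X'⟫ * ‖U‖ ^ 2 - ⟪U, X⟫ * ⟪U, X'⟫)
    (fun X X' Y => by
      simp only [contr3_add_left, inner_add_left, inner_add_right]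
      ring)
    (fun t X Y => by
      simp only [contr3_smul_left, real_inner_smul_left, real_inner_smul_right, smul_eq_mul]
      ring)
    (fun X Y Y' => by
      simp only [contr3_add_left, map_add, inner_add_left, inner_add_right]
      ring)
    (fun t X Y => by
      simp only [contr3_smul_left, map_smul, real_inner_smul_left, real_inner_smul_right,
        smul_eq_mul]
      ring)

theorem contr3SqForm_apply {σ : AlternatingMap ℝ (Euc n) ℝ (Fin 3)} {F : Euc n → Euc n}
    (hsq : ∀ X : Euc n, contr3 σ X ∘ₗ contr3 σ X =
      (-(‖X‖ ^ 2)) • LinearMap.id + tens X X + tens (F X) (F X))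
    (U X : Euc n) : contr3SqForm σ U X = ⟪F X, U⟫ ^ 2 := by
  have h := congrArg (⟪·, U⟫) (LinearMap.congr_fun (hsq X) U)
  simp only [LinearMap.comp_apply, LinearMap.add_apply, LinearMap.smul_apply, LinearMap.id_apply,
    tens, LinearMap.coe_mk, AddHom.coe_mk, inner_add_left, real_inner_smul_left] at h
  simp only [contr3SqForm, LinearMap.BilinMap.toQuadraticMap_apply, LinearMap.mk₂_apply, h,
    real_inner_self_eq_norm_sq, real_inner_comm X U, real_inner_comm (F X) U]
  ring

end Contraction

theorem statement12_general {n : ℕ} (σ : AlternatingMap ℝ (Euc n) ℝ (Fin 3))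
    (F : Euc n → Euc n) (hFcont : Continuous F)
    (hFhom : ∀ (t : ℝ) (X : Euc n), F (t • X) = t • F X)
    (hFperp : ∀ X : Euc n, ⟪F X, X⟫ = 0)
    (hFnorm : ∀ X : Euc n, ‖F X‖ = ‖X‖)
    (hsq : ∀ X : Euc n, contr3 σ X ∘ₗ contr3 σ X =
      (-(‖X‖ ^ 2)) • LinearMap.id + tens X X + tens (F X) (F X)) :
    ∃ L : Euc n →ₗ[ℝ] Euc n, (∀ X : Euc n, L X = F X) ∧
      (∀ X Y : Euc n, ⟪L X, L Y⟫ = ⟪X, Y⟫) ∧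
      (∀ X Y : Euc n, ⟪L X, Y⟫ = -⟪X, L Y⟫) ∧
      L ∘ₗ L = -LinearMap.id := by
  have hFodd : ∀ X, F (-X) = -F X := fun X => by simpa using hFhom (-1) X
  have hFadd : ∀ X Y, F (X + Y) = F X + F Y := fun X Y => ext_inner_right ℝ fun U => by
    obtain ⟨ℓ, hℓ⟩ := exists_linearMap_eq_of_sq_eq_quadraticMap (k := (⟪F ·, U⟫))
      (hFcont.inner continuous_const) (fun X => by simp only [hFodd, inner_neg_left])
      (fun X => (contr3SqForm_apply hsq U X).symm)
    rw [inner_add_left, ← hℓ, ← hℓ, ← hℓ, map_add]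
  let L : Euc n →ₗ[ℝ] Euc n := ⟨⟨F, hFadd⟩, hFhom⟩
  have horth : ∀ X Y, ⟪L X, L Y⟫ = ⟪X, Y⟫ := (⟨L, hFnorm⟩ : Euc n →ₗᵢ[ℝ] Euc n).inner_map_map
  have hskew : ∀ X Y, ⟪L X, Y⟫ = -⟪X, L Y⟫ := fun X Y => by
    have h := hFperp (X + Y)
    simp only [hFadd, inner_add_left, inner_add_right, hFperp] at h
    change ⟪F X, Y⟫ = -⟪X, F Y⟫
    rw [real_inner_comm (F Y) X]
    linarith
  refine ⟨L, fun _ => rfl, horth, hskew, LinearMap.ext fun X => ext_inner_right ℝ fun Z => ?_⟩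
  rw [LinearMap.comp_apply, hskew, horth, LinearMap.neg_apply, LinearMap.id_apply, inner_neg_left]

/-- Let `n ≥ 6`, let `σ` be a 3-form on `ℝⁿ`, and let `F : ℝⁿ → ℝⁿ` be a
continuous map such that `F(tX) = tF(X)`, `⟪F(X), X⟫ = 0`, `‖F(X)‖ = ‖X‖`, and
`σ_X² = −‖X‖² id + X⊗X + F(X)⊗F(X)` for all `X`. Then `F` is linear; moreover `F` is an
orthogonal, skew-symmetric endomorphism of `ℝⁿ` with `F² = −id` (a Hermitian structure). -/
theorem statement12 {n : ℕ} (hn : 6 ≤ n) (σ : AlternatingMap ℝ (Euc n) ℝ (Fin 3))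
    (F : Euc n → Euc n) (hFcont : Continuous F)
    (hFhom : ∀ (t : ℝ) (X : Euc n), F (t • X) = t • F X)
    (hFperp : ∀ X : Euc n, ⟪F X, X⟫ = 0)
    (hFnorm : ∀ X : Euc n, ‖F X‖ = ‖X‖)
    (hsq : ∀ X : Euc n, contr3 σ X ∘ₗ contr3 σ X =
      (-(‖X‖ ^ 2)) • LinearMap.id + tens X X + tens (F X) (F X)) :
    ∃ L : Euc n →ₗ[ℝ] Euc n, (∀ X : Euc n, L X = F X) ∧
      (∀ X Y : Euc n, ⟪L X, L Y⟫ = ⟪X, Y⟫) ∧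
      (∀ X Y : Euc n, ⟪L X, Y⟫ = -⟪X, L Y⟫) ∧
      L ∘ₗ L = -LinearMap.id :=
  statement12_general σ F hFcont hFhom hFperp hFnorm hsq
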